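/- arXiv:2303.00411 — 2 statements merged into one kernel-verified Lean document; each statement's English description precedes it below -/
import Mathlib

section
/- Let φ:[0,T]→[0,∞) be continuous and α,β∈[0,∞) constants such that φ(t) ≤ α + β(∫₀ᵗ φ(s)² ds)^{1/2} for all t∈[0,T]. Then φ(t) ≤ α(1+β²t)^{1/2} exp(1/2 + β²t/2) for all t∈[0,T]. -/
open MeasureTheory Set

/-- Key algebraic inequality: `1 + √X·e^{(1+X)/2} < √(1+X)·e^{(1+X)/2}` for `X ≥ 0`. -/
lemma gronwall_sqrt_key (X : ℝ) (hX : 0 ≤ X) :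
    1 + Real.sqrt X * Real.exp ((1 + X) / 2) < Real.sqrt (1 + X) * Real.exp ((1 + X) / 2) := by
  set E := Real.exp ((1 + X) / 2) with hE
  have hEpos : 0 < E := Real.exp_pos _
  have hE2 : E ^ 2 = Real.exp (1 + X) := by
    rw [sq, ← Real.exp_add]; congr 1; ring
  set s0 := Real.sqrt X with hs0def
  set s1 := Real.sqrt (1 + X) with hs1def
  have hs0 : s0 ^ 2 = X := Real.sq_sqrt hX
  have hs1 : s1 ^ 2 = 1 + X := Real.sq_sqrt (by linarith)
  have hs0n : 0 ≤ s0 := Real.sqrt_nonneg _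
  have hs1n : 0 ≤ s1 := Real.sqrt_nonneg _
  have hprod : s0 * s1 ≤ X + 1 / 2 := by
    have h1 : s0 * s1 = Real.sqrt (X * (1 + X)) := (Real.sqrt_mul hX _).symm
    have h2 : Real.sqrt (X * (1 + X)) ≤ Real.sqrt ((X + 1 / 2) ^ 2) :=
      Real.sqrt_le_sqrt (by nlinarith)
    rw [Real.sqrt_sq (by linarith)] at h2
    linarith [h1 ▸ h2]
  have hsum_sq : (s1 + s0) ^ 2 ≤ 2 + 4 * X := by nlinarith
  have hexpX : (1 + X / 2) ^ 2 ≤ Real.exp X := by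
    have h1 : 1 + X / 2 ≤ Real.exp (X / 2) := by
      have := Real.add_one_le_exp (X / 2); linarith
    have h2 : (1 + X / 2) ^ 2 ≤ Real.exp (X / 2) ^ 2 :=
      pow_le_pow_left₀ (by linarith) h1 2
    have h3 : Real.exp (X / 2) ^ 2 = Real.exp X := by
      rw [sq, ← Real.exp_add]; congr 1; ring
    linarith [h3 ▸ h2]
  have he1 : (2.7182818283 : ℝ) < Real.exp 1 := Real.exp_one_gt_d9
  have hE2big : 2 + 4 * X < E ^ 2 := by
    rw [hE2, Real.exp_add]
    have h4 : Real.exp 1 * (1 + X / 2) ^ 2 ≤ Real.exp 1 * Real.exp X :=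
      mul_le_mul_of_nonneg_left hexpX (Real.exp_pos 1).le
    have h6 : (2.7182818283 : ℝ) * (1 + X / 2) ^ 2 ≤ Real.exp 1 * (1 + X / 2) ^ 2 :=
      mul_le_mul_of_nonneg_right he1.le (sq_nonneg _)
    have h5 : 2 + 4 * X < (2.7182818283 : ℝ) * (1 + X / 2) ^ 2 := by
      nlinarith [sq_nonneg (2 * X - 1.9), sq_nonneg (2 * X - 1.886)]
    linarith
  have hsum : s1 + s0 < E := by
    have := lt_of_pow_lt_pow_left₀ 2 hEpos.le (lt_of_le_of_lt hsum_sq hE2big)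
    exact this
  have hlt : s0 < s1 := by
    apply lt_of_pow_lt_pow_left₀ 2 hs1n
    rw [hs0, hs1]; linarith
  nlinarith [mul_pos (sub_pos.2 hlt) (sub_pos.2 hsum)]

lemma gronwall_sqrt_aux (T α β : ℝ) (hT : 0 < T) (hα : 0 < α) (hβ : 0 ≤ β)
    (φ : ℝ → ℝ) (hcont : ContinuousOn φ (Icc 0 T))
    (hpos : ∀ t ∈ Icc (0:ℝ) T, 0 ≤ φ t)
    (hgron : ∀ t ∈ Icc (0:ℝ) T, φ t ≤ α + β * Real.sqrt (∫ s in (0:ℝ)..t, (φ s)^2)) :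
    ∀ t ∈ Icc (0:ℝ) T,
      φ t ≤ α * Real.sqrt (1 + β^2 * t) * Real.exp (1/2 + β^2 * t / 2) := by
  set u : ℝ → ℝ := fun t => ∫ s in (0:ℝ)..t, (φ s)^2 with hu
  set B : ℝ → ℝ := fun t => α^2 * t * Real.exp (1 + β^2 * t) with hB
  have hφ2 : ContinuousOn (fun s => (φ s)^2) (Icc 0 T) := hcont.pow 2
  have hintT : IntegrableOn (fun s => (φ s)^2) (uIcc 0 T) volume := by
    rw [uIcc_of_le hT.le]
    exact hφ2.integrableOn_compact isCompact_Icc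
  have hint : ∀ t ∈ Icc (0:ℝ) T, IntervalIntegrable (fun s => (φ s)^2) volume 0 t := by
    intro t ht
    apply (hφ2.mono (Icc_subset_Icc le_rfl ht.2)).intervalIntegrable_of_Icc ht.1
  -- continuity of u
  have huc : ContinuousOn u (Icc 0 T) := by
    have := intervalIntegral.continuousOn_primitive_interval (a := (0:ℝ)) (b := T) hintT
    rwa [uIcc_of_le hT.le] at this
  -- right derivative of u
  have hud : ∀ x ∈ Ico (0:ℝ) T, HasDerivWithinAt u ((φ x)^2) (Ici x) x := by
    intro x hx
    have hmem : Icc 0 T ∈ nhdsWithin x (Ici x) := by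
      apply mem_nhdsWithin.2 ⟨Iio T, isOpen_Iio, hx.2, ?_⟩
      intro y hy
      exact ⟨le_trans hx.1 hy.2, le_of_lt hy.1⟩
    have hxIcc : x ∈ Icc (0:ℝ) T := ⟨hx.1, hx.2.le⟩
    have hmem' : Icc 0 T ∈ nhdsWithin x (Ioi x) := by
      apply mem_nhdsWithin.2 ⟨Iio T, isOpen_Iio, hx.2, ?_⟩
      intro y hy
      exact ⟨le_trans hx.1 (le_of_lt hy.2), le_of_lt hy.1⟩
    apply intervalIntegral.integral_hasDerivWithinAt_right (hint x hxIcc)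
      (s := Ici x) (t := Ioi x)
    · exact ⟨Icc 0 T, hmem', hφ2.aestronglyMeasurable measurableSet_Icc⟩
    · exact ((hφ2 x hxIcc).mono_of_mem_nhdsWithin hmem')
  -- derivative of B
  have hBd : ∀ x : ℝ, HasDerivAt B (α^2 * Real.exp (1 + β^2 * x)
      + (α^2 * x) * (Real.exp (1 + β^2 * x) * β^2)) x := by
    intro x
    have h1 : HasDerivAt (fun t : ℝ => 1 + β^2 * t) (β^2) x := by
      simpa using ((hasDerivAt_id x).const_mul (β^2)).const_add 1
    have h2 : HasDerivAt (fun t : ℝ => Real.exp (1 + β^2 * t))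
        (Real.exp (1 + β^2 * x) * β^2) x := h1.exp
    have h3 : HasDerivAt (fun t : ℝ => α^2 * t) (α^2) x := by
      simpa using (hasDerivAt_id x).const_mul (α^2)
    exact h3.mul h2
  -- sqrt of B
  have hsqrtB : ∀ t : ℝ, 0 ≤ t →
      β * Real.sqrt (B t) = α * (Real.sqrt (β^2 * t) * Real.exp ((1 + β^2 * t) / 2)) := by
    intro t ht
    have hBt : B t = (α * Real.sqrt t * Real.exp ((1 + β^2 * t) / 2)) ^ 2 := by
      have hexp2 : Real.exp ((1 + β^2 * t) / 2) ^ 2 = Real.exp (1 + β^2 * t) := by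
        rw [sq, ← Real.exp_add]; congr 1; ring
      rw [mul_pow, mul_pow, Real.sq_sqrt ht, hexp2]
    rw [hBt, Real.sqrt_sq (by positivity)]
    rw [Real.sqrt_mul (sq_nonneg β), Real.sqrt_sq hβ]
    ring
  -- comparison u ≤ B
  have hcomp : ∀ ⦃x⦄, x ∈ Icc (0:ℝ) T → u x ≤ B x := by
    apply image_le_of_deriv_right_lt_deriv_boundary huc hud ?_ hBd
    · -- bound
      intro x hx hux
      have hxIcc : x ∈ Icc (0:ℝ) T := ⟨hx.1, hx.2.le⟩
      have hφx : φ x ≤ α + β * Real.sqrt (B x) := by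
        have := hgron x hxIcc
        calc φ x ≤ α + β * Real.sqrt (u x) := this
          _ = α + β * Real.sqrt (B x) := by rw [hux]
      rw [hsqrtB x hx.1] at hφx
      set X := β^2 * x with hXdef
      have hX : 0 ≤ X := mul_nonneg (sq_nonneg β) hx.1
      have hkey := gronwall_sqrt_key X hX
      have hφx' : φ x ≤ α * (1 + Real.sqrt X * Real.exp ((1 + X) / 2)) := by
        rw [mul_add, mul_one] at *; linarith
      have h1 : φ x ^ 2 ≤ (α * (1 + Real.sqrt X * Real.exp ((1 + X) / 2))) ^ 2 := by
        have hφn := hpos x hxIcc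
        nlinarith
      have h2 : (α * (1 + Real.sqrt X * Real.exp ((1 + X) / 2))) ^ 2
          < α ^ 2 * ((1 + X) * Real.exp (1 + X)) := by
        have hlhs : (1 + Real.sqrt X * Real.exp ((1 + X) / 2)) ^ 2
            < (Real.sqrt (1 + X) * Real.exp ((1 + X) / 2)) ^ 2 := by
          exact pow_lt_pow_left₀ hkey (by positivity) two_ne_zero
        have hrhs : (Real.sqrt (1 + X) * Real.exp ((1 + X) / 2)) ^ 2
            = (1 + X) * Real.exp (1 + X) := by
          rw [mul_pow, Real.sq_sqrt (by linarith)]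
          congr 1
          rw [sq, ← Real.exp_add]; congr 1; ring
        have hα2 : (0:ℝ) < α ^ 2 := by positivity
        calc (α * (1 + Real.sqrt X * Real.exp ((1 + X) / 2))) ^ 2
            = α ^ 2 * (1 + Real.sqrt X * Real.exp ((1 + X) / 2)) ^ 2 := by ring
          _ < α ^ 2 * ((Real.sqrt (1 + X) * Real.exp ((1 + X) / 2)) ^ 2) :=
              (mul_lt_mul_iff_right₀ hα2).2 hlhs
          _ = α ^ 2 * ((1 + X) * Real.exp (1 + X)) := by rw [hrhs]
      calc φ x ^ 2 ≤ _ := h1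
        _ < α ^ 2 * ((1 + X) * Real.exp (1 + X)) := h2
        _ = α^2 * Real.exp (1 + β^2 * x)
            + (α^2 * x) * (Real.exp (1 + β^2 * x) * β^2) := by rw [hXdef]; ring
    · -- initial value
      simp [hu, hB]
  -- conclusion
  intro t ht
  have h1 : φ t ≤ α + β * Real.sqrt (u t) := hgron t ht
  have h2 : Real.sqrt (u t) ≤ Real.sqrt (B t) := Real.sqrt_le_sqrt (hcomp ht)
  have h3 : φ t ≤ α + β * Real.sqrt (B t) := by nlinarith
  rw [hsqrtB t ht.1] at h3
  set X := β^2 * t with hXdef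
  have hX : 0 ≤ X := mul_nonneg (sq_nonneg β) ht.1
  have hkey := (gronwall_sqrt_key X hX).le
  have hgoal : α + α * (Real.sqrt X * Real.exp ((1 + X) / 2))
      ≤ α * Real.sqrt (1 + X) * Real.exp ((1 + X) / 2) := by nlinarith
  have hexpeq : Real.exp (1/2 + X / 2) = Real.exp ((1 + X) / 2) := by congr 1; ring
  rw [hexpeq]
  linarith

theorem continuous_sqrt_gronwall (T α β : ℝ) (hT : 0 < T) (hα : 0 ≤ α) (hβ : 0 ≤ β)
    (φ : ℝ → ℝ) (hcont : ContinuousOn φ (Icc 0 T))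
    (hpos : ∀ t ∈ Icc (0:ℝ) T, 0 ≤ φ t)
    (hgron : ∀ t ∈ Icc (0:ℝ) T, φ t ≤ α + β * Real.sqrt (∫ s in (0:ℝ)..t, (φ s)^2)) :
    ∀ t ∈ Icc (0:ℝ) T,
      φ t ≤ α * Real.sqrt (1 + β^2 * t) * Real.exp (1/2 + β^2 * t / 2) := by
  rcases eq_or_lt_of_le hα with hα0 | hαpos
  · -- α = 0
    intro t ht
    set C := Real.sqrt (1 + β^2 * t) * Real.exp (1/2 + β^2 * t / 2) with hCdef
    have hC : 0 < C := by
      have h1 : (0:ℝ) < 1 + β^2 * t := by nlinarith [ht.1, sq_nonneg β]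
      exact mul_pos (Real.sqrt_pos.2 h1) (Real.exp_pos _)
    have hεbound : ∀ ε : ℝ, 0 < ε → φ t ≤ ε * C := by
      intro ε hε
      have hgron' : ∀ s ∈ Icc (0:ℝ) T, φ s ≤ ε + β * Real.sqrt (∫ r in (0:ℝ)..s, (φ r)^2) := by
        intro s hs
        have := hgron s hs
        rw [← hα0] at this
        linarith
      have := gronwall_sqrt_aux T ε β hT hε hβ φ hcont hpos hgron' t ht
      rw [hCdef]
      linarith [this]
    have hφt : φ t ≤ 0 := by
      by_contra h
      push_neg at h
      have hε := hεbound (φ t / (2 * C)) (by positivity)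
      have heq : φ t / (2 * C) * C = φ t / 2 := by
        field_simp
      rw [heq] at hε
      linarith
    rw [← hα0, zero_mul, zero_mul]
    exact hφt
  · exact gronwall_sqrt_aux T α β hT hαpos hβ φ hcont hpos hgron
end

section
/- Let α,β ≥ 0 and (φ_j)_{j≥0} be a nonnegative real sequence such that φ_j ≤ α + β(∑_{i=0}^{j-1} φ_i²)^{1/2} for all j ≥ 0. Then φ_j ≤ α(1+β²j)^{1/2} exp(1/2 + β²j/2) for all j ≥ 0. -/
lemma exp_ge_two_add_four (x : ℝ) (hx : 0 ≤ x) : 2 + 4*x ≤ Real.exp (1+x) := by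
  have h1 : x + 1/2 ≤ Real.exp (x - 1/2) := by
    have := Real.add_one_le_exp (x - 1/2); linarith
  have h2 : (4:ℝ) ≤ Real.exp (3/2) := by
    have e1 : (2.7182818283 : ℝ) < Real.exp 1 := Real.exp_one_gt_d9
    have e2 : (3/2 : ℝ) ≤ Real.exp (1/2) := by
      have := Real.add_one_le_exp (1/2 : ℝ); linarith
    have : Real.exp (3/2 : ℝ) = Real.exp 1 * Real.exp (1/2) := by
      rw [← Real.exp_add]; norm_num
    rw [this]
    nlinarith [Real.exp_pos (1/2 : ℝ), Real.exp_pos (1 : ℝ)]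
  have h3 : Real.exp (1+x) = Real.exp (3/2) * Real.exp (x - 1/2) := by
    rw [← Real.exp_add]; ring_nf
  rw [h3]
  nlinarith [Real.exp_pos (x - 1/2)]

lemma sqrt_sum_le_exp (x : ℝ) (hx : 0 ≤ x) :
    Real.sqrt (1+x) + Real.sqrt x ≤ Real.exp (1/2 + x/2) := by
  have h1x : (0:ℝ) ≤ 1 + x := by linarith
  have hs1 := Real.sq_sqrt h1x
  have hs2 := Real.sq_sqrt hx
  have hn1 := Real.sqrt_nonneg (1+x)
  have hn2 := Real.sqrt_nonneg x
  have hsq : (Real.sqrt (1+x) + Real.sqrt x)^2 ≤ 2 + 4*x := by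
    nlinarith [sq_nonneg (Real.sqrt (1+x) - Real.sqrt x)]
  have hexp : (Real.sqrt (1+x) + Real.sqrt x)^2 ≤ Real.exp (1+x) :=
    hsq.trans (exp_ge_two_add_four x hx)
  have hE : Real.exp (1/2 + x/2) = Real.sqrt (Real.exp (1+x)) := by
    rw [show (1/2 + x/2 : ℝ) = (1+x)/2 by ring, Real.exp_half]
  rw [hE]
  calc Real.sqrt (1+x) + Real.sqrt x
      = Real.sqrt ((Real.sqrt (1+x) + Real.sqrt x)^2) := by
        rw [Real.sqrt_sq (by positivity)]
    _ ≤ Real.sqrt (Real.exp (1+x)) := Real.sqrt_le_sqrt hexp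

theorem discrete_sqrt_gronwall (α β : ℝ) (hα : 0 ≤ α) (hβ : 0 ≤ β)
    (φ : ℕ → ℝ) (hpos : ∀ j, 0 ≤ φ j)
    (hgron : ∀ j, φ j ≤ α + β * Real.sqrt (∑ i ∈ Finset.range j, (φ i)^2)) :
    ∀ j, φ j ≤ α * Real.sqrt (1 + β^2 * j) * Real.exp (1/2 + β^2 * j / 2) := by
  intro j
  induction j using Nat.strong_induction_on with
  | _ j ih =>
  set x : ℝ := β^2 * j with hxdef
  have hx0 : 0 ≤ x := by positivity
  have h1x : (0:ℝ) ≤ 1 + x := by linarith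
  set E : ℝ := Real.exp (1/2 + x/2) with hEdef
  have hEpos : 0 < E := Real.exp_pos _
  -- bound each φ i ^ 2 for i < j
  have hterm : ∀ i ∈ Finset.range j,
      (φ i)^2 ≤ α^2 * ((1 + β^2*i) * Real.exp (1 + β^2*i)) := by
    intro i hi
    have hib := ih i (Finset.mem_range.mp hi)
    have hbnd : (φ i)^2 ≤ (α * Real.sqrt (1 + β^2*i) * Real.exp (1/2 + β^2*i/2))^2 :=
      pow_le_pow_left₀ (hpos i) hib 2
    have heq : (α * Real.sqrt (1 + β^2*i) * Real.exp (1/2 + β^2*i/2))^2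
        = α^2 * ((1 + β^2*i) * Real.exp (1 + β^2*i)) := by
      have hi0 : (0:ℝ) ≤ 1 + β^2*i := by positivity
      rw [mul_pow, mul_pow, Real.sq_sqrt hi0, ← Real.exp_nat_mul]
      ring_nf
    rw [heq] at hbnd; exact hbnd
  -- telescoping bound on the sum
  have htel : ∑ i ∈ Finset.range j, ((1 + β^2*i) * Real.exp (1 + β^2*i))
      ≤ (j : ℝ) * Real.exp (1 + x) := by
    have hstep : ∀ i ∈ Finset.range j,
        (1 + β^2*i) * Real.exp (1 + β^2*i)
        ≤ ((i+1 : ℕ) : ℝ) * Real.exp (1 + β^2*(i+1 : ℕ)) - (i:ℝ) * Real.exp (1 + β^2*i) := by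
      intro i _
      push_cast
      have hβ2 : 1 + β^2 ≤ Real.exp (β^2) := by
        have := Real.add_one_le_exp (β^2); linarith
      have hsplit : Real.exp (1 + β^2*(i+1)) = Real.exp (1 + β^2*i) * Real.exp (β^2) := by
        rw [← Real.exp_add]; ring_nf
      rw [hsplit]
      have hep := Real.exp_pos (1 + β^2*(i:ℝ))
      have hi0 : (0:ℝ) ≤ (i:ℝ) := Nat.cast_nonneg i
      have hp : ((i:ℝ)+1) * (Real.exp (1+β^2*i) * (1+β^2))
          ≤ ((i:ℝ)+1) * (Real.exp (1+β^2*i) * Real.exp (β^2)) := by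
        apply mul_le_mul_of_nonneg_left _ (by positivity)
        exact mul_le_mul_of_nonneg_left hβ2 hep.le
      nlinarith [mul_nonneg (sq_nonneg β) hep.le, mul_nonneg (mul_nonneg hi0 (sq_nonneg β)) hep.le]
    calc ∑ i ∈ Finset.range j, ((1 + β^2*i) * Real.exp (1 + β^2*i))
        ≤ ∑ i ∈ Finset.range j, (((i+1 : ℕ) : ℝ) * Real.exp (1 + β^2*(i+1 : ℕ))
            - (i:ℝ) * Real.exp (1 + β^2*i)) := Finset.sum_le_sum hstep
      _ = (j : ℝ) * Real.exp (1 + x) := by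
          rw [Finset.sum_range_sub (fun n => (n:ℝ) * Real.exp (1 + β^2*n)) j, hxdef]
          push_cast; ring
  have hS : ∑ i ∈ Finset.range j, (φ i)^2 ≤ α^2 * ((j:ℝ) * Real.exp (1 + x)) := by
    calc ∑ i ∈ Finset.range j, (φ i)^2
        ≤ ∑ i ∈ Finset.range j, α^2 * ((1 + β^2*i) * Real.exp (1 + β^2*i)) :=
          Finset.sum_le_sum hterm
      _ = α^2 * ∑ i ∈ Finset.range j, ((1 + β^2*i) * Real.exp (1 + β^2*i)) :=
          (Finset.mul_sum _ _ _).symm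
      _ ≤ α^2 * ((j:ℝ) * Real.exp (1 + x)) := by
          apply mul_le_mul_of_nonneg_left htel (sq_nonneg α)
  -- hence the sqrt bound
  have hsqrtS : β * Real.sqrt (∑ i ∈ Finset.range j, (φ i)^2) ≤ α * Real.sqrt x * E := by
    have h1 : Real.sqrt (∑ i ∈ Finset.range j, (φ i)^2)
        ≤ Real.sqrt (α^2 * ((j:ℝ) * Real.exp (1 + x))) := Real.sqrt_le_sqrt hS
    have h2 : Real.sqrt (α^2 * ((j:ℝ) * Real.exp (1 + x)))
        = α * (Real.sqrt j * E) := by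
      rw [Real.sqrt_mul (sq_nonneg α), Real.sqrt_sq hα,
        Real.sqrt_mul (Nat.cast_nonneg j), hEdef,
        show (1/2 + x/2 : ℝ) = (1+x)/2 by ring, Real.exp_half]
    rw [h2] at h1
    have h3 : β * Real.sqrt (∑ i ∈ Finset.range j, (φ i)^2)
        ≤ β * (α * (Real.sqrt j * E)) :=
      mul_le_mul_of_nonneg_left h1 hβ
    have h4 : β * (α * (Real.sqrt j * E)) = α * Real.sqrt x * E := by
      rw [hxdef, show β^2 * (j:ℝ) = β^2 * (j:ℝ) from rfl,
        Real.sqrt_mul (sq_nonneg β), Real.sqrt_sq hβ]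
      ring
    linarith [h3, h4.le]
  -- key inequality to absorb the additive α
  have hkey : Real.sqrt (1+x) + Real.sqrt x ≤ E := sqrt_sum_le_exp x hx0
  have hone : 1 + Real.sqrt x * E ≤ Real.sqrt (1+x) * E := by
    have hs1 := Real.sq_sqrt h1x
    have hs2 := Real.sq_sqrt hx0
    have hn1 := Real.sqrt_nonneg (1+x)
    have hn2 := Real.sqrt_nonneg x
    have hmono : Real.sqrt x ≤ Real.sqrt (1+x) := Real.sqrt_le_sqrt (by linarith)
    nlinarith [mul_le_mul_of_nonneg_left hkey (by linarith : (0:ℝ) ≤ Real.sqrt (1+x) - Real.sqrt x)]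
  calc φ j ≤ α + β * Real.sqrt (∑ i ∈ Finset.range j, (φ i)^2) := hgron j
    _ ≤ α + α * Real.sqrt x * E := by linarith
    _ = α * (1 + Real.sqrt x * E) := by ring
    _ ≤ α * (Real.sqrt (1+x) * E) := mul_le_mul_of_nonneg_left hone hα
    _ = α * Real.sqrt (1 + β^2*j) * Real.exp (1/2 + β^2*j/2) := by
        rw [hxdef, hEdef]; ring
end
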